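/- If s > 0 is irrational, then L₁(s) ∩ L₂(s) = {0}. -/

import Mathlib

/-!
Comparing coordinates of `m (2,0) + n (2s,-2s) = p (0,2) + q (2s,2s)` gives `m = (q - n) s`
and `p = -2 n s`. An integer equal to an integer multiple of an irrational number must vanish
together with the multiplier, so `m = 0`, `q = n`, then `n = p = 0`.
-/

theorem Irrational.eq_zero_of_intCast_eq_intCast_mul {s : ℝ} (hs : Irrational s) {a b : ℤ}
    (h : (a : ℝ) = b * s) : a = 0 ∧ b = 0 := by
  have hb : b = 0 := by
    by_contra hb
    exact (hs.intCast_mul hb).ne_int a h.symm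
  subst hb
  exact ⟨by simpa using h, rfl⟩

theorem lattices_intersect_trivially (s : ℝ) (hirr : Irrational s) :
    (AddSubgroup.closure {((2 : ℝ), (0 : ℝ)), ((2*s : ℝ), (-(2*s) : ℝ))} : Set (ℝ × ℝ)) ∩
      (AddSubgroup.closure {((0 : ℝ), (2 : ℝ)), ((2*s : ℝ), (2*s : ℝ))} : Set (ℝ × ℝ))
      = {0} := by
  refine Set.eq_singleton_iff_unique_mem.mpr ⟨⟨zero_mem _, zero_mem _⟩, ?_⟩
  rintro x ⟨hx₁, hx₂⟩
  obtain ⟨m, n, rfl⟩ := AddSubgroup.mem_closure_pair.mp hx₁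
  obtain ⟨p, q, hpq⟩ := AddSubgroup.mem_closure_pair.mp hx₂
  simp only [Prod.smul_mk, zsmul_eq_mul, Prod.mk_add_mk, Prod.mk.injEq] at hpq
  obtain ⟨hfst, hsnd⟩ := hpq
  obtain ⟨rfl, hqn⟩ := hirr.eq_zero_of_intCast_eq_intCast_mul (a := m) (b := q - n)
    (by push_cast; linarith)
  obtain rfl : q = n := sub_eq_zero.mp hqn
  obtain ⟨-, hn⟩ := hirr.eq_zero_of_intCast_eq_intCast_mul (a := p) (b := -2 * q)
    (by push_cast; linarith)
  obtain rfl : q = 0 := by omega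
  simp
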